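/- Let p be a prime and n ≥ 2. Then (1/((p-1)p^{n-1})) times the T^n-coefficient of the power series (1 - T)(1 - T²)/((1 - pT)(1 - T²/p)) equals 1 - 1/(p²+p+1) + 1/((p²+p+1)·p^{3(n-1)/2}) if n is odd, and 1 - 1/(p²+p+1) - (p+1)/((p²+p+1)·p^{3n/2-1}) if n is even. -/

import Mathlib

open PowerSeries

/-- Coefficient sequence of `(1-T)(1-T²)/((1-qT)(1-T²/q))`. -/
noncomputable def mdcc (q : ℚ) (m : ℕ) : ℚ :=
  if m = 0 then 1
  else if Odd m then (q - 1) / (q ^ 2 + q + 1) * ((q + 1) * q ^ m + (1 / q) ^ (m / 2))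
  else (q - 1) * (q + 1) / (q ^ 2 + q + 1) * (q ^ m - (1 / q) ^ (m / 2))

lemma mdcc_key (q : ℚ) (hq : 2 ≤ q) :
    (1 - PowerSeries.X) * (1 - PowerSeries.X ^ 2) =
      PowerSeries.mk (mdcc q) *
        ((1 - PowerSeries.C (R := ℚ) q * PowerSeries.X) *
          (1 - PowerSeries.C (R := ℚ) (1 / q) * PowerSeries.X ^ 2)) := by
  have hq0 : q ≠ 0 := by linarith
  have hQ : q ^ 2 + q + 1 ≠ 0 := by nlinarith
  have hC : (PowerSeries.C (R := ℚ) q) * (PowerSeries.C (R := ℚ) (1 / q)) = 1 := by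
    rw [← map_mul, mul_one_div, div_self hq0, map_one]
  have hD : (1 - PowerSeries.C (R := ℚ) q * PowerSeries.X) *
      (1 - PowerSeries.C (R := ℚ) (1 / q) * PowerSeries.X ^ 2) =
      1 - PowerSeries.C (R := ℚ) q * PowerSeries.X - PowerSeries.C (R := ℚ) (1 / q) * PowerSeries.X ^ 2
        + PowerSeries.X ^ 3 := by
    have : (1 - PowerSeries.C (R := ℚ) q * PowerSeries.X) *
        (1 - PowerSeries.C (R := ℚ) (1 / q) * PowerSeries.X ^ 2) =
        1 - PowerSeries.C (R := ℚ) q * PowerSeries.X - PowerSeries.C (R := ℚ) (1 / q) * PowerSeries.X ^ 2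
          + (PowerSeries.C (R := ℚ) q * PowerSeries.C (R := ℚ) (1 / q)) * PowerSeries.X ^ 3 := by ring
    rw [this, hC, one_mul]
  rw [hD]
  have hL : (1 - PowerSeries.X) * (1 - PowerSeries.X ^ 2) =
      (1 : PowerSeries ℚ) - PowerSeries.X ^ 1 - PowerSeries.X ^ 2 + PowerSeries.X ^ 3 := by ring
  have hR : PowerSeries.mk (mdcc q) *
      (1 - PowerSeries.C (R := ℚ) q * PowerSeries.X - PowerSeries.C (R := ℚ) (1 / q) * PowerSeries.X ^ 2
        + PowerSeries.X ^ 3) =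
      PowerSeries.mk (mdcc q)
        - PowerSeries.C (R := ℚ) q * (PowerSeries.mk (mdcc q) * PowerSeries.X ^ 1)
        - PowerSeries.C (R := ℚ) (1 / q) * (PowerSeries.mk (mdcc q) * PowerSeries.X ^ 2)
        + PowerSeries.mk (mdcc q) * PowerSeries.X ^ 3 := by ring
  rw [hL, hR]
  ext m
  simp only [map_add, map_sub, PowerSeries.coeff_C_mul, PowerSeries.coeff_mul_X_pow',
    PowerSeries.coeff_mk, PowerSeries.coeff_one, PowerSeries.coeff_X_pow]
  rcases m with _ | _ | _ | _ | m
  · norm_num [mdcc]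
  · norm_num [mdcc]
    field_simp
    ring
  · norm_num [mdcc, Nat.odd_iff]
    field_simp
    ring
  · norm_num [mdcc, Nat.odd_iff]
    field_simp
    ring
  · have h4 : ¬ (m + 4 = 0) := by omega
    have h3 : ¬ (m + 4 = 1) := by omega
    have h2 : ¬ (m + 4 = 2) := by omega
    have h1 : ¬ (m + 4 = 3) := by omega
    rw [if_neg h4, if_neg h3, if_neg h2, if_neg h1]
    have e1 : (1 : ℕ) ≤ m + 4 := by omega
    have e2 : (2 : ℕ) ≤ m + 4 := by omega
    have e3 : (3 : ℕ) ≤ m + 4 := by omega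
    rw [if_pos e1, if_pos e2, if_pos e3]
    have d1 : m + 4 - 1 = m + 3 := by omega
    have d2 : m + 4 - 2 = m + 2 := by omega
    have d3 : m + 4 - 3 = m + 1 := by omega
    rw [d1, d2, d3]
    rcases Nat.even_or_odd m with ⟨j, hj⟩ | ⟨j, hj⟩
    · subst hj
      have o1 : ¬ Odd (j + j + 4) := by simp [Nat.odd_iff]; omega
      have o2 : Odd (j + j + 3) := ⟨j + 1, by ring⟩
      have o3 : ¬ Odd (j + j + 2) := by simp [Nat.odd_iff]; omega
      have o4 : Odd (j + j + 1) := ⟨j, by ring⟩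
      have n1 : j + j + 4 ≠ 0 := by omega
      have n2 : j + j + 3 ≠ 0 := by omega
      have n3 : j + j + 2 ≠ 0 := by omega
      have n4 : j + j + 1 ≠ 0 := by omega
      have v1 : (j + j + 4) / 2 = j + 2 := by omega
      have v2 : (j + j + 3) / 2 = j + 1 := by omega
      have v3 : (j + j + 2) / 2 = j + 1 := by omega
      have v4 : (j + j + 1) / 2 = j := by omega
      simp only [mdcc, if_neg n1, if_neg n2, if_neg n3, if_neg n4, if_pos o2, if_pos o4,
        if_neg o1, if_neg o3, v1, v2, v3, v4]
      have hqj : q ^ j ≠ 0 := pow_ne_zero _ hq0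
      rw [show j + j + 4 = j + (j + 4) by ring, show j + j + 3 = j + (j + 3) by ring,
        show j + j + 2 = j + (j + 2) by ring, show j + j + 1 = j + (j + 1) by ring]
      simp only [pow_add, one_div, inv_pow]
      field_simp
      ring
    · subst hj
      have o1 : Odd (2 * j + 1 + 4) := ⟨j + 2, by ring⟩
      have o2 : ¬ Odd (2 * j + 1 + 3) := by simp [Nat.odd_iff]; omega
      have o3 : Odd (2 * j + 1 + 2) := ⟨j + 1, by ring⟩
      have o4 : ¬ Odd (2 * j + 1 + 1) := by simp [Nat.odd_iff]; omega
      have n1 : 2 * j + 1 + 4 ≠ 0 := by omega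
      have n2 : 2 * j + 1 + 3 ≠ 0 := by omega
      have n3 : 2 * j + 1 + 2 ≠ 0 := by omega
      have n4 : 2 * j + 1 + 1 ≠ 0 := by omega
      have v1 : (2 * j + 1 + 4) / 2 = j + 2 := by omega
      have v2 : (2 * j + 1 + 3) / 2 = j + 2 := by omega
      have v3 : (2 * j + 1 + 2) / 2 = j + 1 := by omega
      have v4 : (2 * j + 1 + 1) / 2 = j + 1 := by omega
      simp only [mdcc, if_neg n1, if_neg n2, if_neg n3, if_neg n4, if_pos o1, if_pos o3,
        if_neg o2, if_neg o4, v1, v2, v3, v4]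
      have hqj : q ^ j ≠ 0 := pow_ne_zero _ hq0
      rw [show 2 * j + 1 + 4 = 2 * j + 5 by ring, show 2 * j + 1 + 3 = 2 * j + 4 by ring,
        show 2 * j + 1 + 2 = 2 * j + 3 by ring, show 2 * j + 1 + 1 = 2 * j + 2 by ring,
        show 2 * j + 5 = j + (j + 5) by ring, show 2 * j + 4 = j + (j + 4) by ring,
        show 2 * j + 3 = j + (j + 3) by ring, show 2 * j + 2 = j + (j + 2) by ring]
      simp only [pow_add, one_div, inv_pow]
      field_simp
      ring

/-- For a prime `p` and `n ≥ 2`, `(1/((p-1)p^{n-1}))·[(1-T)(1-T²)/((1-pT)(1-T²/p))]_n`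
equals `1 - 1/(p²+p+1) + 1/((p²+p+1)·p^{3(n-1)/2})` for odd `n`, and
`1 - 1/(p²+p+1) - (p+1)/((p²+p+1)·p^{3n/2-1})` for even `n`. -/
theorem max_density_coeff_unit_const (p : ℕ) [Fact p.Prime] (n : ℕ) (hn : 2 ≤ n) :
    (1 / (((p : ℚ) - 1) * (p : ℚ) ^ (n - 1))) *
        PowerSeries.coeff (R := ℚ) n
          ((1 - PowerSeries.X) * (1 - PowerSeries.X ^ 2) *
            ((1 - PowerSeries.C (R := ℚ) (p : ℚ) * PowerSeries.X) *
              (1 - PowerSeries.C (R := ℚ) (1 / (p : ℚ)) * PowerSeries.X ^ 2))⁻¹) =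
      if Odd n then
        1 - 1 / ((p : ℚ) ^ 2 + p + 1) +
          1 / (((p : ℚ) ^ 2 + p + 1) * (p : ℚ) ^ ((3 * (n - 1)) / 2))
      else
        1 - 1 / ((p : ℚ) ^ 2 + p + 1) -
          ((p : ℚ) + 1) / (((p : ℚ) ^ 2 + p + 1) * (p : ℚ) ^ (3 * n / 2 - 1)) := by
  have hp2 : 2 ≤ p := (Fact.out : p.Prime).two_le
  have hq : (2 : ℚ) ≤ (p : ℚ) := by exact_mod_cast hp2
  have hq0 : (p : ℚ) ≠ 0 := by linarith
  have hq1 : (p : ℚ) - 1 ≠ 0 := by intro h; nlinarith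
  have hQ : (p : ℚ) ^ 2 + (p : ℚ) + 1 ≠ 0 := by nlinarith
  have hD : PowerSeries.constantCoeff (R := ℚ)
      ((1 - PowerSeries.C (R := ℚ) (p : ℚ) * PowerSeries.X) *
        (1 - PowerSeries.C (R := ℚ) (1 / (p : ℚ)) * PowerSeries.X ^ 2)) ≠ 0 := by
    simp
  rw [mdcc_key (p : ℚ) hq, mul_assoc, PowerSeries.mul_inv_cancel _ hD, mul_one,
    PowerSeries.coeff_mk]
  rcases Nat.even_or_odd n with he | ho
  · obtain ⟨j, hj⟩ : ∃ j, n = 2 * j + 2 := by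
      obtain ⟨k, hk⟩ := he; exact ⟨k - 1, by omega⟩
    subst hj
    rw [if_neg (by simp [Nat.odd_iff])]
    have e1 : 2 * j + 2 - 1 = 2 * j + 1 := by omega
    have e2 : 3 * (2 * j + 2) / 2 - 1 = 3 * j + 2 := by omega
    have e3 : (2 * j + 2) / 2 = j + 1 := by omega
    have o : ¬ Odd (2 * j + 2) := by simp [Nat.odd_iff]
    have nz : 2 * j + 2 ≠ 0 := by omega
    rw [e1, e2, mdcc, if_neg nz, if_neg o, e3]
    have hr : (p : ℚ) ^ j ≠ 0 := pow_ne_zero _ hq0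
    rw [show 2 * j + 2 = j + (j + 2) by ring, show 2 * j + 1 = j + (j + 1) by ring,
      show 3 * j + 2 = j + (j + (j + 2)) by ring]
    simp only [pow_add, one_div, inv_pow]
    field_simp
    ring
  · rw [if_pos ho]
    obtain ⟨k, hk⟩ := ho
    subst hk
    have e1 : 2 * k + 1 - 1 = 2 * k := by omega
    have e2 : 3 * (2 * k) / 2 = 3 * k := by omega
    have e3 : (2 * k + 1) / 2 = k := by omega
    have o : Odd (2 * k + 1) := ⟨k, by ring⟩
    have nz : 2 * k + 1 ≠ 0 := by omega
    rw [e1, e2, mdcc, if_neg nz, if_pos o, e3]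
    have hr : (p : ℚ) ^ k ≠ 0 := pow_ne_zero _ hq0
    rw [show 2 * k + 1 = k + (k + 1) by ring, show 2 * k = k + k by ring,
      show 3 * k = k + (k + k) by ring]
    simp only [pow_add, one_div, inv_pow]
    field_simp
    ring
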